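/- (van der Corput second derivative exponential sum bound) Let a < b be integers and let f be twice differentiable on [a,b] with |f''(x)| ≥ ρ > 0 for all x ∈ [a,b] and f'' of constant sign. Then | Σ_{l=a}^{b} e^{2πi f(l)} | ≤ (|f'(b) − f'(a)| + 2) (4/√ρ + 3). -/

import Mathlib

/-!
Write `e x = exp (2πix)`. If `f'` is monotone with values in `[m + δ, m + 1 - δ]`, the mean value
theorem makes the increments `φ_l = f (l + 1) - f l - m` monotone with values in `[δ, 1 - δ]`. The
identity `e φ + 1 = -i cot (πφ) (e φ - 1)` then writes twice the sum as its two end terms plus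
`i ∑ c_l (e (f (l + 1)) - e (f l))` with `c_l = -cot (π φ_l)` monotone and bounded by `cot (πδ)`,
and Abel summation bounds the latter by `4 cot (πδ) ≤ 4 / (πδ)` (Kusmin–Landau).

If `f'' ≥ ρ`, group the points by the integer `k` nearest to `f'`; there are at most
`|f' b - f' a| + 2` such `k`. In a block, the points with `|f' - k| ≤ √ρ / 2` number at most
`1 / √ρ + 1` because `f'` grows at rate `ρ`, and Kusmin–Landau with `δ = √ρ / 2` bounds each of
the two remaining pieces by `1 + 4 / (π √ρ)`; as `8 / π < 3`, a block contributes at most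
`4 / √ρ + 3` (for `ρ ≥ 1` a block has at most two points). The case `f'' ≤ -ρ` follows by
complex conjugation.
-/

open Real

namespace VanDerCorput

noncomputable def e (x : ℝ) : ℂ := Complex.exp (2 * π * Complex.I * x)

lemma e_add (x y : ℝ) : e (x + y) = e x * e y := by
  simp only [e, Complex.ofReal_add, mul_add, Complex.exp_add]

lemma e_intCast (n : ℤ) : e n = 1 :=
  Complex.exp_eq_one_iff.mpr ⟨n, by push_cast; ring⟩

lemma norm_e (x : ℝ) : ‖e x‖ = 1 := by
  rw [e, Complex.norm_exp]
  simp

lemma e_neg (x : ℝ) : e (-x) = starRingEnd ℂ (e x) := by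
  rw [e, e, ← Complex.exp_conj]
  simp [map_ofNat]

lemma e_ne_one {φ : ℝ} (h₀ : 0 < φ) (h₁ : φ < 1) : e φ ≠ 1 := by
  rintro h
  obtain ⟨n, hn⟩ := Complex.exp_eq_one_iff.mp h
  have hφ : φ = n := by
    have : (φ : ℂ) = n := by
      have h2πI : 2 * (π : ℂ) * Complex.I ≠ 0 := by simp [Real.pi_ne_zero]
      exact mul_left_cancel₀ h2πI (by rw [hn]; ring)
    exact_mod_cast this
  rw [hφ] at h₀ h₁
  have : (0 : ℤ) < n := by exact_mod_cast h₀
  have : n < 1 := by exact_mod_cast h₁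
  omega

lemma e_add_one {φ : ℝ} (h : e φ ≠ 1) :
    e φ + 1 = Complex.I * (-cot (π * φ) : ℝ) * (e φ - 1) := by
  have h' : 1 - e φ ≠ 0 := sub_ne_zero.mpr (Ne.symm h)
  rw [Complex.ofReal_neg, Complex.ofReal_cot, Complex.ofReal_mul, Complex.cot_pi_eq_exp_ratio]
  rw [e] at h' ⊢
  field_simp
  ring

lemma e_add_e {x y : ℝ} (m : ℤ) (h₀ : 0 < y - x - m) (h₁ : y - x - m < 1) :
    e x + e y = Complex.I * ((-cot (π * (y - x - m)) : ℝ) • (e y - e x)) := by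
  have hy : e y = e x * e (y - x - m) := by
    rw [← mul_one (e x * _), ← e_intCast m, ← e_add, ← e_add]
    ring_nf
  rw [hy, Complex.real_smul, ← mul_sub_one, ← mul_one_add, add_comm, e_add_one (e_ne_one h₀ h₁)]
  ring

lemma norm_sum_e_neg {ι : Type*} (s : Finset ι) (g : ι → ℝ) :
    ‖∑ i ∈ s, e (-g i)‖ = ‖∑ i ∈ s, e (g i)‖ := by
  simp only [e_neg, ← map_sum, Complex.norm_conj]

lemma norm_sum_e_le_card {ι : Type*} (s : Finset ι) (g : ι → ℝ) :
    ‖∑ i ∈ s, e (g i)‖ ≤ s.card :=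
  (norm_sum_le _ _).trans (by simp [norm_e])

lemma cot_le_cot {x y : ℝ} (hx : 0 < x) (hxy : x ≤ y) (hy : y < π) : cot y ≤ cot x := by
  have hsx : 0 < sin x := sin_pos_of_pos_of_lt_pi hx (hxy.trans_lt hy)
  have hsy : 0 < sin y := sin_pos_of_pos_of_lt_pi (hx.trans_le hxy) hy
  have h : 0 ≤ sin (y - x) := sin_nonneg_of_nonneg_of_le_pi (by linarith) (by linarith)
  rw [sin_sub] at h
  rw [cot_eq_cos_div_sin, cot_eq_cos_div_sin, div_le_div_iff₀ hsy hsx]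
  linarith

lemma cot_pi_sub (x : ℝ) : cot (π - x) = -cot x := by
  rw [cot_eq_cos_div_sin, cot_eq_cos_div_sin, cos_pi_sub, sin_pi_sub, neg_div]

lemma cot_nonneg {x : ℝ} (hx : 0 < x) (hx' : x ≤ π / 2) : 0 ≤ cot x := by
  simpa [cot_eq_cos_div_sin] using cot_le_cot hx hx' (by linarith [pi_pos])

lemma abs_cot_pi_mul_le {δ φ : ℝ} (hδ : 0 < δ) (hφ : φ ∈ Set.Icc δ (1 - δ)) :
    |cot (π * φ)| ≤ cot (π * δ) := by
  have hπ := pi_pos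
  obtain ⟨h₁, h₂⟩ := hφ
  rw [abs_le]
  constructor
  · rw [neg_le, ← cot_pi_sub]
    exact cot_le_cot (by nlinarith) (by nlinarith) (by nlinarith)
  · exact cot_le_cot (by positivity) (by nlinarith) (by nlinarith)

lemma cot_le_inv {x : ℝ} (hx : 0 < x) (hx' : x ≤ π / 2) : cot x ≤ x⁻¹ := by
  rw [cot_eq_cos_div_sin, div_le_iff₀ (sin_pos_of_pos_of_lt_pi hx (by linarith [pi_pos])),
    inv_mul_eq_div, le_div_iff₀ hx]
  rcases hx'.lt_or_eq with hlt | rfl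
  · have hcos : 0 < cos x := cos_pos_of_mem_Ioo ⟨by linarith, hlt⟩
    have := lt_tan hx hlt
    rw [tan_eq_sin_div_cos, lt_div_iff₀ hcos] at this
    linarith
  · simp

section Abel

variable {E : Type*} [SeminormedAddCommGroup E] [NormedSpace ℝ E] {c : ℕ → ℝ} {F : ℕ → E}

lemma norm_sum_range_succ_smul_sub_sub_le {n : ℕ} (hc : ∀ i < n, c i ≤ c (i + 1))
    (hF : ∀ i, ‖F i‖ ≤ 1) :
    ‖∑ i ∈ Finset.range (n + 1), c i • (F (i + 1) - F i) - c n • F (n + 1)‖ ≤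
      |c 0| + (c n - c 0) := by
  induction n with
  | zero =>
    rw [zero_add, Finset.sum_range_one, smul_sub, sub_sub_cancel_left, norm_neg, norm_smul,
      Real.norm_eq_abs, sub_self, add_zero]
    exact mul_le_of_le_one_right (abs_nonneg _) (hF 0)
  | succ n ih =>
    have hcn : c n ≤ c (n + 1) := hc n n.lt_succ_self
    have hrec : ∑ i ∈ Finset.range (n + 2), c i • (F (i + 1) - F i) - c (n + 1) • F (n + 2) =
        (∑ i ∈ Finset.range (n + 1), c i • (F (i + 1) - F i) - c n • F (n + 1)) +
          (c n - c (n + 1)) • F (n + 1) := by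
      rw [Finset.sum_range_succ, smul_sub, sub_smul]
      abel
    have hlast : ‖(c n - c (n + 1)) • F (n + 1)‖ ≤ c (n + 1) - c n := by
      rw [norm_smul, Real.norm_eq_abs, abs_sub_comm, abs_of_nonneg (sub_nonneg.mpr hcn)]
      exact mul_le_of_le_one_right (sub_nonneg.mpr hcn) (hF _)
    rw [hrec]
    linarith [norm_add_le_of_le (ih fun i hi => hc i (by omega)) hlast]

lemma norm_sum_range_smul_sub_le {n : ℕ} {C : ℝ} (hc : ∀ i, i + 1 < n → c i ≤ c (i + 1))
    (hC : ∀ i < n, |c i| ≤ C) (hC₀ : 0 ≤ C) (hF : ∀ i, ‖F i‖ ≤ 1) :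
    ‖∑ i ∈ Finset.range n, c i • (F (i + 1) - F i)‖ ≤ 4 * C := by
  rcases n with _ | n
  · simpa using hC₀
  have hlast : ‖c n • F (n + 1)‖ ≤ |c n| := by
    rw [norm_smul, Real.norm_eq_abs]
    exact mul_le_of_le_one_right (abs_nonneg _) (hF _)
  have := norm_sum_range_succ_smul_sub_sub_le (n := n) (fun i hi => hc i (by omega)) hF
  have h₀ := hC 0 (by omega)
  have hn := hC n (by omega)
  linarith [norm_le_norm_sub_add (∑ i ∈ Finset.range (n + 1), c i • (F (i + 1) - F i))
    (c n • F (n + 1)), le_abs_self (c n), neg_abs_le (c 0)]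

end Abel

theorem norm_sum_range_e_le {x : ℕ → ℝ} {n : ℕ} {δ : ℝ} (m : ℤ) (hδ : 0 < δ) (hδ' : δ ≤ 1 / 2)
    (hx : ∀ i, i + 1 < n → x (i + 1) - x i - m ∈ Set.Icc δ (1 - δ))
    (hmono : ∀ i, i + 2 < n → x (i + 1) - x i ≤ x (i + 2) - x (i + 1)) :
    ‖∑ i ∈ Finset.range n, e (x i)‖ ≤ 1 + 2 * cot (π * δ) := by
  have hcot₀ : 0 ≤ cot (π * δ) := cot_nonneg (by positivity) (by nlinarith [pi_pos])
  rcases n with _ | n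
  · rw [Finset.range_zero, Finset.sum_empty, norm_zero]
    positivity
  set F : ℕ → ℂ := fun i => e (x i)
  set φ : ℕ → ℝ := fun i => x (i + 1) - x i - m
  set c : ℕ → ℝ := fun i => -cot (π * φ i)
  have hpair : ∀ i < n, F i + F (i + 1) = Complex.I * (c i • (F (i + 1) - F i)) := by
    intro i hi
    obtain ⟨h₁, h₂⟩ := hx i (by omega)
    exact e_add_e m (by linarith) (by linarith)
  have hsum : 2 * ∑ i ∈ Finset.range (n + 1), F i =
      F 0 + F n + Complex.I * ∑ i ∈ Finset.range n, c i • (F (i + 1) - F i) := by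
    rw [Finset.mul_sum (Finset.range n),
      ← Finset.sum_congr rfl fun i hi => hpair i (Finset.mem_range.mp hi), Finset.sum_add_distrib]
    linear_combination Finset.sum_range_succ F n + Finset.sum_range_succ' F n
  have hc : ∀ i, i + 1 < n → c i ≤ c (i + 1) := by
    intro i hi
    obtain ⟨h₁, -⟩ := hx i (by omega)
    obtain ⟨-, h₂⟩ := hx (i + 1) (by omega)
    have hφ := hmono i (by omega)
    simp only [c, φ, neg_le_neg_iff]
    exact cot_le_cot (by nlinarith [pi_pos]) (by nlinarith [pi_pos]) (by nlinarith [pi_pos])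
  have habel := norm_sum_range_smul_sub_le hc
    (fun i hi => (abs_neg _).trans_le (abs_cot_pi_mul_le hδ (hx i (by omega)))) hcot₀
    (fun i => (norm_e (x i)).le)
  have h2 : ‖2 * ∑ i ∈ Finset.range (n + 1), F i‖ ≤ 2 + 4 * cot (π * δ) := by
    rw [hsum]
    refine (norm_add_le _ _).trans ?_
    rw [norm_mul, Complex.norm_I, one_mul]
    linarith [norm_add_le (F 0) (F n), norm_e (x 0), norm_e (x n)]
  rw [norm_mul, Complex.norm_two] at h2
  linarith

section Calculus

variable {g g' : ℝ → ℝ}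

lemma exists_mem_Icc_sub_eq_of_hasDerivAt {x : ℝ}
    (hg : ∀ y ∈ Set.Icc x (x + 1), HasDerivAt g (g' y) y) :
    ∃ ξ ∈ Set.Icc x (x + 1), g (x + 1) - g x = g' ξ := by
  obtain ⟨ξ, hξ, h⟩ := exists_hasDerivAt_eq_slope g g' (lt_add_one x)
    (fun y hy => (hg y hy).continuousAt.continuousWithinAt)
    (fun y hy => hg y (Set.Ioo_subset_Icc_self hy))
  exact ⟨ξ, Set.Ioo_subset_Icc_self hξ, by rw [h, add_sub_cancel_left, div_one]⟩

variable {a b C : ℝ}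

lemma mul_sub_le_sub_of_le_hasDerivAt (hg : ∀ x ∈ Set.Icc a b, HasDerivAt g (g' x) x)
    (hC : ∀ x ∈ Set.Icc a b, C ≤ g' x) {x y : ℝ} (hx : x ∈ Set.Icc a b) (hy : y ∈ Set.Icc a b)
    (hxy : x ≤ y) : C * (y - x) ≤ g y - g x := by
  refine (convex_Icc a b).mul_sub_le_image_sub_of_le_deriv
    (fun z hz => (hg z hz).continuousAt.continuousWithinAt)
    (fun z hz => (hg z (interior_subset hz)).differentiableAt.differentiableWithinAt)
    (fun z hz => ?_) x hx y hy hxy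
  rw [(hg z (interior_subset hz)).deriv]
  exact hC z (interior_subset hz)

lemma monotoneOn_of_hasDerivAt_nonneg (hg : ∀ x ∈ Set.Icc a b, HasDerivAt g (g' x) x)
    (hg' : ∀ x ∈ Set.Icc a b, 0 ≤ g' x) : MonotoneOn g (Set.Icc a b) := fun x hx y hy hxy => by
  simpa using mul_sub_le_sub_of_le_hasDerivAt hg hg' hx hy hxy

end Calculus

theorem norm_sum_Icc_e_le_of_monotoneOn_deriv {u v m : ℤ} {f f' : ℝ → ℝ} {δ : ℝ} (hδ : 0 < δ)
    (hδ' : δ ≤ 1 / 2) (hf : ∀ x ∈ Set.Icc (u : ℝ) v, HasDerivAt f (f' x) x)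
    (hf' : MonotoneOn f' (Set.Icc (u : ℝ) v))
    (hrange : ∀ x ∈ Set.Icc (u : ℝ) v, f' x - m ∈ Set.Icc δ (1 - δ)) :
    ‖∑ l ∈ Finset.Icc u v, e (f l)‖ ≤ 1 + 2 * cot (π * δ) := by
  set n := (v + 1 - u).toNat
  have hsum : ∑ l ∈ Finset.Icc u v, e (f l) = ∑ i ∈ Finset.range n, e (f (u + i)) := by
    rw [Int.Icc_eq_finset_map, Finset.sum_map]
    simp [n]
  have hstep : ∀ i, i + 1 < n → ∃ ξ ∈ Set.Icc (u + i : ℝ) (u + i + 1),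
      ξ ∈ Set.Icc (u : ℝ) v ∧ f (u + (i + 1 : ℕ)) - f (u + i) = f' ξ := by
    intro i hi
    have hv : (u : ℝ) + i + 1 ≤ v := by exact_mod_cast (by omega : u + i + 1 ≤ v)
    have hsub : Set.Icc (u + i : ℝ) (u + i + 1) ⊆ Set.Icc (u : ℝ) v :=
      Set.Icc_subset_Icc (by simp) hv
    obtain ⟨ξ, hξ, h⟩ := exists_mem_Icc_sub_eq_of_hasDerivAt fun y hy => hf y (hsub hy)
    exact ⟨ξ, hξ, hsub hξ, by push_cast; rw [← add_assoc, h]⟩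
  rw [hsum]
  refine norm_sum_range_e_le m hδ hδ' (fun i hi => ?_) (fun i hi => ?_)
  · obtain ⟨ξ, -, hξ, h⟩ := hstep i hi
    rw [h]
    exact hrange ξ hξ
  · obtain ⟨ξ, hξi, hξ, h⟩ := hstep i (by omega)
    obtain ⟨η, hηi, hη, h'⟩ := hstep (i + 1) hi
    rw [h, show i + 2 = (i + 1) + 1 by rfl, h']
    exact hf' hξ hη (by push_cast at hηi; linarith [hξi.2, hηi.1])

lemma card_Icc_le_of_le_hasDerivAt {u v : ℤ} {g g' : ℝ → ℝ} {ρ c L : ℝ} (hρ : 0 < ρ) (hL : 0 ≤ L)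
    (hg : ∀ x ∈ Set.Icc (u : ℝ) v, HasDerivAt g (g' x) x) (hρg : ∀ x ∈ Set.Icc (u : ℝ) v, ρ ≤ g' x)
    (hrange : ∀ x ∈ Set.Icc (u : ℝ) v, g x ∈ Set.Icc c (c + L)) :
    ((Finset.Icc u v).card : ℝ) ≤ L / ρ + 1 := by
  rcases lt_or_ge v u with h | h
  · rw [Finset.Icc_eq_empty_of_lt h, Finset.card_empty, Nat.cast_zero]
    positivity
  have huv : (u : ℝ) ≤ v := by exact_mod_cast h
  have hcard : ((Finset.Icc u v).card : ℝ) = v + 1 - u := by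
    exact_mod_cast Int.card_Icc_of_le u v (by omega)
  have hslope := mul_sub_le_sub_of_le_hasDerivAt hg hρg (Set.left_mem_Icc.mpr huv)
    (Set.right_mem_Icc.mpr huv) huv
  have hv := hrange v (Set.right_mem_Icc.mpr huv)
  have hu := hrange u (Set.left_mem_Icc.mpr huv)
  have : (v : ℝ) - u ≤ L / ρ := by
    rw [le_div_iff₀ hρ]
    linarith [hv.2, hu.1]
  linarith

lemma card_Icc_round_le (x y : ℝ) : ((Finset.Icc (round x) (round y)).card : ℝ) ≤ |y - x| + 2 := by
  rcases le_or_gt (round x) (round y + 1) with h | h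
  · have hcard : ((Finset.Icc (round x) (round y)).card : ℝ) = round y + 1 - round x := by
      exact_mod_cast Int.card_Icc_of_le _ _ h
    linarith [round_le_add_half y, sub_half_lt_round x, le_abs_self (y - x)]
  · rw [Finset.Icc_eq_empty_of_lt (by omega), Finset.card_empty, Nat.cast_zero]
    positivity

lemma exists_Icc_eq_filter_of_monotoneOn {a b : ℤ} {h : ℝ → ℝ}
    (hh : MonotoneOn h (Set.Icc (a : ℝ) b)) {J : Set ℝ} (hJ : J.OrdConnected)
    [DecidablePred (· ∈ J)] :
    ∃ u v : ℤ, (Finset.Icc a b).filter (fun l : ℤ => h l ∈ J) = Finset.Icc u v ∧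
      Set.Icc (u : ℝ) v ⊆ Set.Icc (a : ℝ) b ∩ h ⁻¹' J := by
  set S : Finset ℤ := {l ∈ Finset.Icc a b | h l ∈ J}
  set T : Set ℝ := Set.Icc (a : ℝ) b ∩ h ⁻¹' J
  have hT : T.OrdConnected := by
    obtain ⟨K, hK, hTK⟩ := hJ.preimage_monotoneOn hh
    simp only [T, hTK]
    exact Set.ordConnected_Icc.inter hK
  have hmem : ∀ l : ℤ, l ∈ S ↔ (l : ℝ) ∈ T := by
    intro l
    simp [S, T]
  rcases S.eq_empty_or_nonempty with hS | hS
  · refine ⟨1, 0, hS, ?_⟩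
    rw [Set.Icc_eq_empty (by norm_num)]
    exact Set.empty_subset _
  have hsub : Set.Icc (S.min' hS : ℝ) (S.max' hS) ⊆ T :=
    hT.out ((hmem _).mp (S.min'_mem hS)) ((hmem _).mp (S.max'_mem hS))
  refine ⟨S.min' hS, S.max' hS, Finset.ext fun l => ⟨fun hl => ?_, fun hl => ?_⟩, hsub⟩
  · exact Finset.mem_Icc.mpr ⟨S.min'_le l hl, S.le_max' l hl⟩
  · obtain ⟨h₁, h₂⟩ := Finset.mem_Icc.mp hl
    exact (hmem l).mpr (hsub ⟨by exact_mod_cast h₁, by exact_mod_cast h₂⟩)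

lemma sum_eq_sum_filter_Iio_add_Icc_add_Ioi {ι M : Type*} [AddCommMonoid M] (s : Finset ι)
    (h : ι → ℝ) (g : ι → M) {θ₁ θ₂ : ℝ} (hθ : θ₁ ≤ θ₂) :
    ∑ i ∈ s, g i = ∑ i ∈ s with h i ∈ Set.Iio θ₁, g i + ∑ i ∈ s with h i ∈ Set.Icc θ₁ θ₂, g i +
      ∑ i ∈ s with h i ∈ Set.Ioi θ₂, g i := by
  simp only [Finset.sum_filter, ← Finset.sum_add_distrib]
  refine Finset.sum_congr rfl fun i _ => ?_
  rcases lt_or_ge (h i) θ₁ with h₁ | h₁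
  · simp [h₁, h₁.not_ge, (h₁.trans_le hθ).not_gt]
  rcases le_or_gt (h i) θ₂ with h₂ | h₂
  · simp [h₁, h₂, h₁.not_gt, h₂.not_gt]
  · simp [h₁.not_gt, h₂, h₂.not_ge]

theorem norm_sum_Icc_e_le_cot_add_of_deriv_mem_Icc {u v k : ℤ} {f f' f'' : ℝ → ℝ} {ρ δ : ℝ}
    (hρ : 0 < ρ) (hδ : 0 < δ) (hδ' : δ ≤ 1 / 2)
    (hf : ∀ x ∈ Set.Icc (u : ℝ) v, HasDerivAt f (f' x) x)
    (hf' : ∀ x ∈ Set.Icc (u : ℝ) v, HasDerivAt f' (f'' x) x)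
    (hf'' : ∀ x ∈ Set.Icc (u : ℝ) v, ρ ≤ f'' x)
    (hk : ∀ x ∈ Set.Icc (u : ℝ) v, f' x ∈ Set.Icc (k - 1 / 2 : ℝ) (k + 1 / 2)) :
    ‖∑ l ∈ Finset.Icc u v, e (f l)‖ ≤ 2 * (1 + 2 * cot (π * δ)) + (2 * δ / ρ + 1) := by
  have hmono := monotoneOn_of_hasDerivAt_nonneg hf' fun x hx => hρ.le.trans (hf'' x hx)
  rw [sum_eq_sum_filter_Iio_add_Icc_add_Ioi (Finset.Icc u v) (fun l : ℤ => f' l)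
    (fun l => e (f l)) (by linarith : (k : ℝ) - δ ≤ k + δ)]
  obtain ⟨u₁, v₁, h₁, hsub₁⟩ := exists_Icc_eq_filter_of_monotoneOn hmono Set.ordConnected_Iio
    (J := Set.Iio (k - δ))
  obtain ⟨u₂, v₂, h₂, hsub₂⟩ := exists_Icc_eq_filter_of_monotoneOn hmono Set.ordConnected_Icc
    (J := Set.Icc (k - δ) (k + δ))
  obtain ⟨u₃, v₃, h₃, hsub₃⟩ := exists_Icc_eq_filter_of_monotoneOn hmono Set.ordConnected_Ioi
    (J := Set.Ioi (k + δ))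
  rw [h₁, h₂, h₃]
  have hS₁ : ‖∑ l ∈ Finset.Icc u₁ v₁, e (f l)‖ ≤ 1 + 2 * cot (π * δ) := by
    refine norm_sum_Icc_e_le_of_monotoneOn_deriv (m := k - 1) hδ hδ'
      (fun x hx => hf x (hsub₁ hx).1) (hmono.mono fun x hx => (hsub₁ hx).1) fun x hx => ?_
    have hx₁ := hk x (hsub₁ hx).1
    have hx₂ : f' x < k - δ := (hsub₁ hx).2
    push_cast
    constructor <;> linarith [hx₁.1]
  have hS₂ : ‖∑ l ∈ Finset.Icc u₂ v₂, e (f l)‖ ≤ 2 * δ / ρ + 1 :=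
    (norm_sum_e_le_card _ _).trans <| card_Icc_le_of_le_hasDerivAt (c := k - δ) hρ (by positivity)
      (fun x hx => hf' x (hsub₂ hx).1) (fun x hx => hf'' x (hsub₂ hx).1)
      fun x hx => ⟨(hsub₂ hx).2.1, by linarith [(hsub₂ hx).2.2]⟩
  have hS₃ : ‖∑ l ∈ Finset.Icc u₃ v₃, e (f l)‖ ≤ 1 + 2 * cot (π * δ) := by
    refine norm_sum_Icc_e_le_of_monotoneOn_deriv (m := k) hδ hδ'
      (fun x hx => hf x (hsub₃ hx).1) (hmono.mono fun x hx => (hsub₃ hx).1) fun x hx => ?_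
    have hx₁ := hk x (hsub₃ hx).1
    have hx₂ : k + δ < f' x := (hsub₃ hx).2
    constructor <;> linarith [hx₁.2]
  refine norm_add₃_le.trans ?_
  linarith

theorem norm_sum_Icc_e_le_of_deriv_mem_Icc {u v k : ℤ} {f f' f'' : ℝ → ℝ} {ρ : ℝ} (hρ : 0 < ρ)
    (hf : ∀ x ∈ Set.Icc (u : ℝ) v, HasDerivAt f (f' x) x)
    (hf' : ∀ x ∈ Set.Icc (u : ℝ) v, HasDerivAt f' (f'' x) x)
    (hf'' : ∀ x ∈ Set.Icc (u : ℝ) v, ρ ≤ f'' x)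
    (hk : ∀ x ∈ Set.Icc (u : ℝ) v, f' x ∈ Set.Icc (k - 1 / 2 : ℝ) (k + 1 / 2)) :
    ‖∑ l ∈ Finset.Icc u v, e (f l)‖ ≤ 4 / √ρ + 3 := by
  have hs : 0 < √ρ := sqrt_pos.mpr hρ
  rcases le_or_gt 1 ρ with hρ₁ | hρ₁
  · have hcard := card_Icc_le_of_le_hasDerivAt (c := k - 1 / 2) hρ zero_le_one hf' hf''
      fun x hx => ⟨(hk x hx).1, by linarith [(hk x hx).2]⟩
    have : 1 / ρ ≤ 1 := by rw [div_le_one hρ]; exact hρ₁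
    have : 0 ≤ 4 / √ρ := by positivity
    linarith [norm_sum_e_le_card (Finset.Icc u v) fun l : ℤ => f l]
  have hδ' : √ρ / 2 ≤ 1 / 2 := by
    linarith [(sqrt_lt' one_pos).mpr (by simpa using hρ₁ : ρ < 1 ^ 2)]
  refine (norm_sum_Icc_e_le_cot_add_of_deriv_mem_Icc hρ (by positivity) hδ' hf hf' hf'' hk).trans ?_
  have hcot := cot_le_inv (x := π * (√ρ / 2)) (by positivity) (by nlinarith [pi_pos])
  have hinv : (π * (√ρ / 2))⁻¹ = 2 / (π * √ρ) := by field_simp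
  have hcount : 2 * (√ρ / 2) / ρ = 1 / √ρ := by
    rw [div_eq_div_iff hρ.ne' hs.ne']
    linear_combination mul_self_sqrt hρ.le
  have hπ : 8 / (π * √ρ) ≤ 3 / √ρ := by
    rw [div_le_div_iff₀ (by positivity) hs]
    nlinarith [pi_gt_three]
  have h4 : 4 / √ρ = 3 / √ρ + 1 / √ρ := by ring
  have h8 : 8 / (π * √ρ) = 4 * (2 / (π * √ρ)) := by ring
  linarith

theorem norm_sum_Icc_e_le_of_le_secondDeriv {a b : ℤ} {f f' f'' : ℝ → ℝ} {ρ : ℝ} (hρ : 0 < ρ)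
    (hf : ∀ x ∈ Set.Icc (a : ℝ) b, HasDerivAt f (f' x) x)
    (hf' : ∀ x ∈ Set.Icc (a : ℝ) b, HasDerivAt f' (f'' x) x)
    (hf'' : ∀ x ∈ Set.Icc (a : ℝ) b, ρ ≤ f'' x) :
    ‖∑ l ∈ Finset.Icc a b, e (f l)‖ ≤ (|f' b - f' a| + 2) * (4 / √ρ + 3) := by
  have hmono := monotoneOn_of_hasDerivAt_nonneg hf' fun x hx => hρ.le.trans (hf'' x hx)
  have hround : ∀ l ∈ Finset.Icc a b, round (f' l) ∈ Finset.Icc (round (f' a)) (round (f' b)) := by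
    intro l hl
    obtain ⟨hal, hlb⟩ := Finset.mem_Icc.mp hl
    have hl' : (l : ℝ) ∈ Set.Icc (a : ℝ) b := ⟨by exact_mod_cast hal, by exact_mod_cast hlb⟩
    have hab : (a : ℝ) ≤ b := hl'.1.trans hl'.2
    simp only [Finset.mem_Icc, round_eq]
    exact ⟨Int.floor_mono (by linarith [hmono (Set.left_mem_Icc.mpr hab) hl' hl'.1]),
      Int.floor_mono (by linarith [hmono hl' (Set.right_mem_Icc.mpr hab) hl'.2])⟩
  have hblock : ∀ k : ℤ,
      ‖∑ l ∈ (Finset.Icc a b).filter (fun l : ℤ => round (f' l) = k), e (f l)‖ ≤ 4 / √ρ + 3 := by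
    intro k
    obtain ⟨u, v, huv, hsub⟩ := exists_Icc_eq_filter_of_monotoneOn hmono Set.ordConnected_Ico
      (J := Set.Ico (k - 1 / 2 : ℝ) (k + 1 / 2))
    rw [Finset.filter_congr fun l _ => round_eq_iff, huv]
    exact norm_sum_Icc_e_le_of_deriv_mem_Icc hρ (fun x hx => hf x (hsub hx).1)
      (fun x hx => hf' x (hsub hx).1) (fun x hx => hf'' x (hsub hx).1)
      fun x hx => Set.Ico_subset_Icc_self (hsub hx).2
  rw [← Finset.sum_fiberwise_of_maps_to hround]
  calc ‖∑ k ∈ Finset.Icc (round (f' a)) (round (f' b)),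
        ∑ l ∈ (Finset.Icc a b).filter (fun l : ℤ => round (f' l) = k), e (f l)‖
      ≤ ∑ k ∈ Finset.Icc (round (f' a)) (round (f' b)), (4 / √ρ + 3) :=
        (norm_sum_le _ _).trans (Finset.sum_le_sum fun k _ => hblock k)
    _ ≤ (|f' b - f' a| + 2) * (4 / √ρ + 3) := by
        rw [Finset.sum_const, nsmul_eq_mul]
        gcongr
        exact card_Icc_round_le _ _

end VanDerCorput

open VanDerCorput

theorem stmt2_general (a b : ℤ) (f f' f'' : ℝ → ℝ) (ρ : ℝ) (hρ : 0 < ρ)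
    (hd1 : ∀ x ∈ Set.Icc (a : ℝ) b, HasDerivAt f (f' x) x)
    (hd2 : ∀ x ∈ Set.Icc (a : ℝ) b, HasDerivAt f' (f'' x) x)
    (hlow : ∀ x ∈ Set.Icc (a : ℝ) b, ρ ≤ |f'' x|)
    (hsign : (∀ x ∈ Set.Icc (a : ℝ) b, 0 < f'' x) ∨ (∀ x ∈ Set.Icc (a : ℝ) b, f'' x < 0)) :
    ‖∑ l ∈ Finset.Icc a b, Complex.exp (2 * (π : ℂ) * Complex.I * (f l : ℂ))‖ ≤
      (|f' b - f' a| + 2) * (4 / Real.sqrt ρ + 3) := by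
  change ‖∑ l ∈ Finset.Icc a b, e (f l)‖ ≤ _
  rcases hsign with hpos | hneg
  · exact norm_sum_Icc_e_le_of_le_secondDeriv hρ hd1 hd2 fun x hx =>
      (hlow x hx).trans_eq (abs_of_pos (hpos x hx))
  · have h := norm_sum_Icc_e_le_of_le_secondDeriv (f := -f) hρ (fun x hx => (hd1 x hx).neg)
      (fun x hx => (hd2 x hx).neg) fun x hx => (hlow x hx).trans_eq (abs_of_neg (hneg x hx))
    simp only [Pi.neg_apply, neg_sub_neg, norm_sum_e_neg] at h
    rwa [abs_sub_comm] at h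

/-- van der Corput second derivative exponential sum bound -/
theorem stmt2 (a b : ℤ) (hab : a < b) (f f' f'' : ℝ → ℝ) (ρ : ℝ) (hρ : 0 < ρ)
    (hd1 : ∀ x ∈ Set.Icc (a : ℝ) b, HasDerivAt f (f' x) x)
    (hd2 : ∀ x ∈ Set.Icc (a : ℝ) b, HasDerivAt f' (f'' x) x)
    (hlow : ∀ x ∈ Set.Icc (a : ℝ) b, ρ ≤ |f'' x|)
    (hsign : (∀ x ∈ Set.Icc (a : ℝ) b, 0 < f'' x) ∨ (∀ x ∈ Set.Icc (a : ℝ) b, f'' x < 0)) :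
    ‖∑ l ∈ Finset.Icc a b, Complex.exp (2 * (π : ℂ) * Complex.I * (f l : ℂ))‖ ≤
      (|f' b - f' a| + 2) * (4 / Real.sqrt ρ + 3) :=
  stmt2_general a b f f' f'' ρ hρ hd1 hd2 hlow hsign
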